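/- For every positive integer n not divisible by 3, the (3,n)-rational q,t-Catalan polynomial is symmetric in q and t: C_{3,n}(q,t) = C_{3,n}(t,q). -/

import Mathlib

open MvPolynomial

/-- An `(m,n)`-Dyck path: a north/east lattice path from `(0,0)` to `(m,n)` staying
weakly above the diagonal `y = (n/m)x`.  Such a path is encoded by recording, for each
of the `m` columns (indexed `0,…,m-1` from left to right), the number of cells of that
column lying above the path; this gives an antitone sequence, and the diagonal
condition for the east step in column `i` reads `m * c i ≤ n * (m - 1 - i)`. -/
def DyckPath (m n : ℕ) : Type :=
  {c : Fin m → Fin (n + 1) //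
    (∀ i j : Fin m, i ≤ j → (c j : ℕ) ≤ (c i : ℕ)) ∧
      ∀ i : Fin m, m * (c i : ℕ) ≤ n * (m - 1 - (i : ℕ))}

noncomputable instance instFintypeDyckPath (m n : ℕ) : Fintype (DyckPath m n) := by
  classical
  unfold DyckPath
  infer_instance

namespace DyckPath

variable {m n : ℕ}

/-- `λ(Π)`, the set of cells of the `m × n` lattice lying above the path `Π`.
The cell `(i, j)` (with `i : Fin m`, `j : Fin n`) is the cell in column `i + 1`
(from the left) and row `j + 1` (from the bottom) in the paper's 1-based indexing. -/
def cellsAbove (P : DyckPath m n) : Set (Fin m × Fin n) :=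
  {x | n - (P.1 x.1 : ℕ) ≤ (x.2 : ℕ)}

/-- `arm(x)`: the number of cells of `λ(Π)` strictly east of `x` (in the row of `x`). -/
noncomputable def arm (P : DyckPath m n) (x : Fin m × Fin n) : ℕ :=
  {y ∈ P.cellsAbove | x.1 < y.1 ∧ y.2 = x.2}.ncard

/-- `leg(x)`: the number of cells of `λ(Π)` strictly south of `x` (in the column of `x`). -/
noncomputable def leg (P : DyckPath m n) (x : Fin m × Fin n) : ℕ :=
  {y ∈ P.cellsAbove | y.1 = x.1 ∧ y.2 < x.2}.ncard

end DyckPath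

/-- The dinv condition `arm/(leg+1) < m/n < (arm+1)/leg` for a cell with given arm `a`
and leg `l`, the right inequality being interpreted as true when `l = 0`. -/
def dinvCond (m n a l : ℕ) : Prop :=
  (a : ℚ) / ((l : ℚ) + 1) < (m : ℚ) / (n : ℚ) ∧
    (l = 0 ∨ (m : ℚ) / (n : ℚ) < ((a : ℚ) + 1) / (l : ℚ))

namespace DyckPath

variable {m n : ℕ}

/-- `dinv(Π)`: the number of cells `x ∈ λ(Π)` with
`arm(x)/(leg(x)+1) < m/n < (arm(x)+1)/leg(x)`. -/
noncomputable def dinv (P : DyckPath m n) : ℕ :=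
  {x ∈ P.cellsAbove | dinvCond m n (P.arm x) (P.leg x)}.ncard

/-- `area(Π)`: the number of cells of the lattice lying entirely between the path and
the diagonal, i.e. cells lying entirely weakly above the diagonal `y = (n/m)x` and
below the path. -/
noncomputable def area (P : DyckPath m n) : ℕ :=
  {x : Fin m × Fin n | n * ((x.1 : ℕ) + 1) ≤ m * (x.2 : ℕ) ∧ x ∉ P.cellsAbove}.ncard

end DyckPath

/-- The `(m,n)`-rational `q,t`-Catalan polynomial `C_{m,n}(q,t)`, with `q = X 0` and
`t = X 1`:  `C_{m,n}(q,t) = Σ_Π q^{dinv(Π)} t^{area(Π)}` over all `(m,n)`-Dyck paths. -/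
noncomputable def ratCatalan (m n : ℕ) : MvPolynomial (Fin 2) ℤ :=
  ∑ P : DyckPath m n, X 0 ^ P.dinv * X 1 ^ P.area

/-- The rank of the cell `(i, j)` of the `3 × n` lattice: in the paper's 1-based
coordinates `(a, b) = (i+1, j+1)`, this is `R(a,b) = -a·n + 3(b-1)`. -/
def cellRank (n : ℕ) (x : Fin 3 × Fin n) : ℤ :=
  3 * (x.2 : ℤ) - ((x.1 : ℤ) + 1) * (n : ℤ)

/-- The set of positive ranks of the `3 × n` lattice: these, in increasing order, are
the entries of the rank word. -/
def posRank (n : ℕ) : Set ℤ :=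
  {r | 0 < r ∧ ∃ x : Fin 3 × Fin n, cellRank n x = r}

/-- The set of marked ranks of a `(3,n)`-Dyck path: the ranks of the cells above
the path. -/
def markedRank {n : ℕ} (P : DyckPath 3 n) : Set ℤ :=
  cellRank n '' P.cellsAbove

/-- `skips(Π)`: the number of skips of `Π`, i.e. of maximal blocks of consecutive
unmarked entries of the rank word of `Π` having at least one marked entry to the left
and at least one marked entry to the right.  Each such block is counted through its
rightmost entry `r`: `r` is an unmarked entry, some marked entry lies to its left, and
the next entry of the rank word after `r` is marked. -/
noncomputable def DyckPath.skips {n : ℕ} (P : DyckPath 3 n) : ℕ :=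
  {r : ℤ | r ∈ posRank n ∧ r ∉ markedRank P ∧
    (∃ l ∈ markedRank P, l < r) ∧
    ∃ s ∈ markedRank P, r < s ∧ ∀ t ∈ posRank n, r < t → s ≤ t}.ncard


/-!
A `(3,n)`-Dyck path is determined by the heights `(a, b)` of its first two columns; its area
is `n - 1 - (a + b)` and its dinv is an explicit piecewise-linear function of `(a, b)`. When
`3 ∤ n`, a pair of heights is recovered from its dinv and its size `a + b`, and the map
`(dinv, size) ↦ (n - 1 - size, n - 1 - dinv)` sends attained values to attained values. This
gives an involution on `(3,n)`-Dyck paths exchanging dinv and area.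
-/

theorem Set.ncard_eq_sum_ncard_fiber {α β : Type*} [Fintype α] [Fintype β]
    (s : Set (α × β)) : s.ncard = ∑ a, {b | (a, b) ∈ s}.ncard := by
  classical
  simp only [Set.ncard_eq_toFinset_card', Set.toFinset_ofPred, Finset.card_filter]
  rw [← Fintype.sum_prod_type']
  simp

theorem Fin.ncard_of_iff_Ico {n lo hi : ℕ} (p : Fin n → Prop) (hhi : hi ≤ n)
    (hp : ∀ j : Fin n, p j ↔ lo ≤ (j : ℕ) ∧ (j : ℕ) < hi) : {j | p j}.ncard = hi - lo := by
  have himage : Fin.val '' {j | p j} = Set.Ico lo hi := by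
    ext k
    simp only [Set.mem_image, Set.mem_ofPred_eq, hp, Set.mem_Ico]
    exact ⟨fun ⟨j, hj, hjk⟩ => hjk ▸ hj, fun hk => ⟨⟨k, by omega⟩, hk, rfl⟩⟩
  rw [← Set.ncard_image_of_injective _ Fin.val_injective, himage, Set.ncard_eq_toFinset_card',
    Set.toFinset_Ico, Nat.card_Ico]

theorem Fin.ncard_of_iff_Ico_or_Ico {n lo₁ hi₁ lo₂ hi₂ : ℕ} (p : Fin n → Prop)
    (h₁₂ : hi₁ ≤ lo₂) (hn₁ : hi₁ ≤ n) (hn₂ : hi₂ ≤ n)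
    (hp : ∀ j : Fin n, p j ↔ lo₁ ≤ (j : ℕ) ∧ (j : ℕ) < hi₁ ∨ lo₂ ≤ (j : ℕ) ∧ (j : ℕ) < hi₂) :
    {j | p j}.ncard = (hi₁ - lo₁) + (hi₂ - lo₂) := by
  have hunion : {j | p j} = {j : Fin n | lo₁ ≤ (j : ℕ) ∧ (j : ℕ) < hi₁} ∪
      {j : Fin n | lo₂ ≤ (j : ℕ) ∧ (j : ℕ) < hi₂} := by
    ext j; exact hp j
  rw [hunion, Set.ncard_union_eq, Fin.ncard_of_iff_Ico _ hn₁ fun _ => Iff.rfl,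
    Fin.ncard_of_iff_Ico _ hn₂ fun _ => Iff.rfl]
  exact Set.disjoint_left.2 fun j h₁ h₂ => by simp only [Set.mem_ofPred_eq] at h₁ h₂; omega

theorem MvPolynomial.rename_swap_sum_X_pow_mul_X_pow {R α : Type*} [CommSemiring R] [Fintype α]
    (d e : α → ℕ) {σ : α → α} (hσ : Function.Involutive σ) (hde : ∀ x, d (σ x) = e x) :
    rename (Equiv.swap 0 1) (∑ x, X 0 ^ d x * X 1 ^ e x : MvPolynomial (Fin 2) R) =
      ∑ x, X 0 ^ d x * X 1 ^ e x := by
  have hed : ∀ x, e (σ x) = d x := fun x => by rw [← hde, hσ]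
  simp only [map_sum, map_mul, map_pow, rename_X, Equiv.swap_apply_left, Equiv.swap_apply_right]
  rw [← Equiv.sum_comp (hσ.toPerm σ)]
  simp only [Function.Involutive.coe_toPerm, hde, hed, mul_comm]

theorem dinvCond_iff {m n a l : ℕ} (hn : 0 < n) :
    dinvCond m n a l ↔ n * a < m * (l + 1) ∧ (l = 0 ∨ m * l < n * (a + 1)) := by
  have hn' : (0 : ℚ) < n := by exact_mod_cast hn
  unfold dinvCond
  rw [div_lt_div_iff₀ (by positivity) hn']
  refine and_congr (by norm_cast; rw [mul_comm]) ?_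
  rcases Nat.eq_zero_or_pos l with rfl | hl
  · simp
  · rw [div_lt_div_iff₀ hn' (by exact_mod_cast hl)]
    norm_cast
    simp [hl.ne', mul_comm]

/-- `(a, b)` are the numbers of cells above a `(3,n)`-Dyck path in its first two columns; the
third column has none. -/
def IsDyckHeightPair (n : ℕ) (p : ℕ × ℕ) : Prop :=
  p.2 ≤ p.1 ∧ 3 * p.1 ≤ 2 * n ∧ 3 * p.2 ≤ n

/-- Column 1 contributes all of its `b` cells. Of the `a` cells of column 0, the lowest `a - b`
have arm 0 and count iff their leg is at most `n / 3`; the others have arm 1 and count iff their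
leg is at least `n / 3`. -/
def dinvOfHeights (n : ℕ) (p : ℕ × ℕ) : ℕ :=
  p.2 + min (p.1 - p.2) (n / 3 + 1) + (p.1 - max (p.1 - p.2) (n / 3))

/-- `dinvOfHeights n (a, b)` is `a` if `a ≤ n / 3`, `2a - n / 3` if `n / 3 < a` and
`a - b ≤ n / 3`, and `2b + n / 3 + 1` if `n / 3 < a - b`; solve for `(a, b)` given `a + b = s`. -/
def heightsOf (n d s : ℕ) : ℕ × ℕ :=
  if d ≤ n / 3 then (d, s - d)
  else if (d - n / 3) % 2 = 0 then ((d + n / 3) / 2, s - (d + n / 3) / 2)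
  else (s - (d - n / 3 - 1) / 2, (d - n / 3 - 1) / 2)

def dualHeights (n : ℕ) (p : ℕ × ℕ) : ℕ × ℕ :=
  heightsOf n (n - 1 - (p.1 + p.2)) (n - 1 - dinvOfHeights n p)

section HeightArithmetic

variable {n : ℕ} {p : ℕ × ℕ}

theorem dinvOfHeights_le (h3 : ¬ 3 ∣ n) (hp : IsDyckHeightPair n p) :
    dinvOfHeights n p ≤ n - 1 := by
  obtain ⟨h21, h1, h2⟩ := hp
  unfold dinvOfHeights
  omega

theorem heightsOf_dinvOfHeights (hp : IsDyckHeightPair n p) :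
    heightsOf n (dinvOfHeights n p) (p.1 + p.2) = p := by
  obtain ⟨h21, h1, h2⟩ := hp
  unfold heightsOf dinvOfHeights
  split_ifs <;> ext <;> dsimp only <;> omega

theorem isDyckHeightPair_dualHeights (h3 : ¬ 3 ∣ n) (hp : IsDyckHeightPair n p) :
    IsDyckHeightPair n (dualHeights n p) := by
  obtain ⟨h21, h1, h2⟩ := hp
  unfold IsDyckHeightPair dualHeights heightsOf dinvOfHeights
  split_ifs <;> dsimp only <;> omega

theorem dinvOfHeights_dualHeights (h3 : ¬ 3 ∣ n) (hp : IsDyckHeightPair n p) :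
    dinvOfHeights n (dualHeights n p) = n - 1 - (p.1 + p.2) := by
  obtain ⟨h21, h1, h2⟩ := hp
  unfold dualHeights heightsOf dinvOfHeights
  split_ifs <;> dsimp only <;> omega

theorem dualHeights_fst_add_snd (h3 : ¬ 3 ∣ n) (hp : IsDyckHeightPair n p) :
    (dualHeights n p).1 + (dualHeights n p).2 = n - 1 - dinvOfHeights n p := by
  obtain ⟨h21, h1, h2⟩ := hp
  unfold dualHeights heightsOf dinvOfHeights
  split_ifs <;> dsimp only <;> omega

theorem dualHeights_dualHeights (h3 : ¬ 3 ∣ n) (hp : IsDyckHeightPair n p) :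
    dualHeights n (dualHeights n p) = p := by
  have hsum : p.1 + p.2 ≤ n - 1 := by obtain ⟨-, h1, h2⟩ := hp; omega
  rw [dualHeights, dinvOfHeights_dualHeights h3 hp, dualHeights_fst_add_snd h3 hp,
    Nat.sub_sub_self (dinvOfHeights_le h3 hp), Nat.sub_sub_self hsum,
    heightsOf_dinvOfHeights hp]

end HeightArithmetic

namespace DyckPath

section

variable {m n : ℕ}

theorem mem_cellsAbove {P : DyckPath m n} {x : Fin m × Fin n} :
    x ∈ P.cellsAbove ↔ n - (P.1 x.1 : ℕ) ≤ x.2 := Iff.rfl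

theorem leg_eq (P : DyckPath m n) (x : Fin m × Fin n) :
    P.leg x = x.2 - (n - (P.1 x.1 : ℕ)) := by
  have hcol : {y ∈ P.cellsAbove | y.1 = x.1 ∧ y.2 < x.2} =
      Prod.mk x.1 '' {j : Fin n | n - (P.1 x.1 : ℕ) ≤ (j : ℕ) ∧ (j : ℕ) < x.2} := by
    ext ⟨i, j⟩
    simp only [Set.mem_image, Prod.mk.injEq]
    constructor
    · rintro ⟨hmem, rfl, hj⟩
      exact ⟨j, ⟨hmem, hj⟩, rfl, rfl⟩
    · rintro ⟨j, ⟨hmem, hj⟩, rfl, rfl⟩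
      exact ⟨hmem, rfl, hj⟩
  rw [leg, hcol, Set.ncard_image_of_injective _ (Prod.mk_right_injective x.1),
    Fin.ncard_of_iff_Ico _ x.2.isLt.le fun _ => Iff.rfl]

end

variable {n : ℕ}

def heights (P : DyckPath 3 n) : ℕ × ℕ := (P.1 0, P.1 1)

theorem val_two (P : DyckPath 3 n) : (P.1 2 : ℕ) = 0 := by
  simpa using P.2.2 2

theorem isDyckHeightPair_heights (P : DyckPath 3 n) : IsDyckHeightPair n P.heights := by
  have h0 := P.2.2 0
  have h1 := P.2.2 1
  have h10 := P.2.1 0 1 (by decide)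
  simp only [Fin.val_zero, Fin.val_one] at h0 h1
  unfold IsDyckHeightPair heights
  omega

theorem heights_injective : Function.Injective (heights (n := n)) := by
  intro P Q h
  simp only [heights, Prod.mk.injEq] at h
  apply Subtype.ext
  funext i
  fin_cases i
  · exact Fin.ext h.1
  · exact Fin.ext h.2
  · exact Fin.ext (P.val_two.trans Q.val_two.symm)

def ofHeights (p : ℕ × ℕ) (hp : IsDyckHeightPair n p) : DyckPath 3 n :=
  ⟨![⟨p.1, by have := hp.2.1; omega⟩, ⟨p.2, by have := hp.2.2; omega⟩, 0], by
    obtain ⟨h21, h1, h2⟩ := hp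
    constructor
    · intro i j hij
      fin_cases i <;> fin_cases j <;> simp_all
    · intro i
      fin_cases i <;> simp [mul_comm n, h1, h2]⟩

theorem heights_ofHeights (p : ℕ × ℕ) (hp : IsDyckHeightPair n p) :
    (ofHeights p hp).heights = p := rfl

theorem not_mem_cellsAbove_two (P : DyckPath 3 n) (j : Fin n) : (2, j) ∉ P.cellsAbove := by
  simp [mem_cellsAbove, val_two]

theorem arm_zero (P : DyckPath 3 n) (j : Fin n) :
    P.arm (0, j) = if n - (P.1 1 : ℕ) ≤ j then 1 else 0 := by
  have hrow : {y ∈ P.cellsAbove | (0 : Fin 3) < y.1 ∧ y.2 = j} =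
      {y | y = (1, j) ∧ n - (P.1 1 : ℕ) ≤ j} := by
    ext ⟨i, j'⟩
    fin_cases i <;> simp +contextual [mem_cellsAbove, val_two, and_comm]
  split_ifs with h <;> simp [arm, hrow, h]

theorem arm_one (P : DyckPath 3 n) (j : Fin n) : P.arm (1, j) = 0 := by
  have hrow : {y ∈ P.cellsAbove | (1 : Fin 3) < y.1 ∧ y.2 = j} = ∅ := by
    ext ⟨i, j'⟩
    fin_cases i <;> simp [mem_cellsAbove, val_two]
  simp [arm, hrow]

theorem dinv_eq_dinvOfHeights (h3 : ¬ 3 ∣ n) (P : DyckPath 3 n) :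
    P.dinv = dinvOfHeights n P.heights := by
  obtain ⟨h10, h0, h1⟩ := P.isDyckHeightPair_heights
  simp only [heights] at h10 h0 h1
  have hn : 0 < n := by omega
  rw [dinv, Set.ncard_eq_sum_ncard_fiber, Fin.sum_univ_three,
    Fin.ncard_of_iff_Ico_or_Ico (n := n) _ (lo₁ := n - P.1 0)
      (hi₁ := n - P.1 0 + min ((P.1 0 : ℕ) - P.1 1) (n / 3 + 1))
      (lo₂ := n - P.1 0 + max ((P.1 0 : ℕ) - P.1 1) (n / 3)) (hi₂ := n)
      (by omega) (by omega) le_rfl fun j => ?col0,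
    Fin.ncard_of_iff_Ico (n := n) _ (lo := n - P.1 1) (hi := n) le_rfl fun j => ?col1,
    Fin.ncard_of_iff_Ico (n := n) _ (lo := 0) (hi := 0) (Nat.zero_le n) fun j => ?col2]
  · simp only [dinvOfHeights, heights]
    omega
  case col0 =>
    have := j.isLt
    simp only [Set.mem_ofPred_eq, mem_cellsAbove, arm_zero, leg_eq, dinvCond_iff hn]
    split_ifs <;> omega
  case col1 =>
    have := j.isLt
    simp only [Set.mem_ofPred_eq, mem_cellsAbove, arm_one, leg_eq, dinvCond_iff hn]
    omega
  case col2 =>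
    simp [not_mem_cellsAbove_two]

theorem area_eq (h3 : ¬ 3 ∣ n) (P : DyckPath 3 n) :
    P.area = n - 1 - (P.heights.1 + P.heights.2) := by
  obtain ⟨h10, h0, h1⟩ := P.isDyckHeightPair_heights
  simp only [heights] at h10 h0 h1 ⊢
  rw [area, Set.ncard_eq_sum_ncard_fiber, Fin.sum_univ_three,
    Fin.ncard_of_iff_Ico (n := n) _ (lo := n / 3 + 1) (hi := n - P.1 0) (by omega)
      fun j => ?col0,
    Fin.ncard_of_iff_Ico (n := n) _ (lo := n - n / 3) (hi := n - P.1 1) (by omega)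
      fun j => ?col1,
    Fin.ncard_of_iff_Ico (n := n) _ (lo := 0) (hi := 0) (Nat.zero_le n) fun j => ?col2]
  · omega
  all_goals
    have := j.isLt
    simp only [Set.mem_ofPred_eq, mem_cellsAbove, Fin.val_zero, Fin.val_one,
      Fin.val_two, val_two]
    omega

def dual (h3 : ¬ 3 ∣ n) (P : DyckPath 3 n) : DyckPath 3 n :=
  ofHeights (dualHeights n P.heights) (isDyckHeightPair_dualHeights h3 P.isDyckHeightPair_heights)

theorem dual_involutive (h3 : ¬ 3 ∣ n) : Function.Involutive (dual h3) := fun P =>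
  heights_injective <| by
    rw [dual, heights_ofHeights, dual, heights_ofHeights,
      dualHeights_dualHeights h3 P.isDyckHeightPair_heights]

theorem dinv_dual (h3 : ¬ 3 ∣ n) (P : DyckPath 3 n) : (P.dual h3).dinv = P.area := by
  rw [dinv_eq_dinvOfHeights h3, dual, heights_ofHeights,
    dinvOfHeights_dualHeights h3 P.isDyckHeightPair_heights, area_eq h3]

end DyckPath

theorem ratCatalan_three_symm_general (n : ℕ) (h3 : ¬ (3 ∣ n)) :
    MvPolynomial.rename (Equiv.swap (0 : Fin 2) 1) (ratCatalan 3 n) = ratCatalan 3 n :=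
  rename_swap_sum_X_pow_mul_X_pow _ _ (DyckPath.dual_involutive h3) (DyckPath.dinv_dual h3)

/-- For every positive integer `n` not divisible by 3, the
`(3,n)`-rational `q,t`-Catalan polynomial is symmetric in `q` and `t`:
`C_{3,n}(q,t) = C_{3,n}(t,q)` (swapping the two variables fixes the polynomial). -/
theorem ratCatalan_three_symm (n : ℕ) (hn : 0 < n) (h3 : ¬ (3 ∣ n)) :
    MvPolynomial.rename (Equiv.swap (0 : Fin 2) 1) (ratCatalan 3 n) = ratCatalan 3 n :=
  ratCatalan_three_symm_general n h3
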